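/- arXiv:1412.8625 — 8 statements merged into one kernel-verified Lean document; each statement's English description precedes it below -/
import Mathlib

section
/- Let F : [0,2] × [0,2] → ℝ be defined by F(a,b) = a - b if a ≥ b and b ≤ 1; F(a,b) = a - 1 if 1 < a, b ≤ 2; F(a,b) = 0 if a < b and a ≤ 1. Let a₁,…,aₙ, b₁,…,bₙ ∈ [0,2], and let σ, τ be permutations of {1,…,n} such that a_{σ(i)} ≤ a_{σ(j)} and b_{τ(i)} ≤ b_{τ(j)} whenever i < j. Then ∑_{i=1}^n F(a_{σ(i)}, b_{τ(i)}) ≤ ∑_{i=1}^n F(a_i, b_i). That is, the pairing of the sorted sequences minimizes the sum ∑ F(a_i, b_{π(i)}) over permutations π. -/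
/-! Since `F(a,b) = max 0 (a - min b 1)` is a convex function of `a - h b` with `h` monotone, `F` is
submodular. Exchanging the partners of two indices that are paired against the sorted order can only
decrease the sum, by submodularity. Starting from any pairing, repeatedly fix the largest index
that is moved: swapping it with its partner removes it from the support of the permutation without
increasing the sum, so induction on the size of the support ends at the sorted pairing. -/

/-- The piecewise function `F` on `[0,2] × [0,2]`. -/
noncomputable def Fpw (a b : ℝ) : ℝ :=
  if b ≤ a ∧ b ≤ 1 then a - b else if 1 < a ∧ 1 < b then a - 1 else 0

open Finset Equiv

/-- Submodularity on the product order of `α × β`: for `a₁ ≤ a₂`, `b₁ ≤ b₂` the meet and join of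
`(a₁, b₂)` and `(a₂, b₁)` are `(a₁, b₁)` and `(a₂, b₂)`. -/
def IsSubmodular {α β M : Type*} [LE α] [LE β] [Add M] [LE M] (f : α → β → M) : Prop :=
  ∀ ⦃a₁ a₂ : α⦄ ⦃b₁ b₂ : β⦄, a₁ ≤ a₂ → b₁ ≤ b₂ → f a₁ b₁ + f a₂ b₂ ≤ f a₁ b₂ + f a₂ b₁

theorem Fpw_eq_max (a b : ℝ) : Fpw a b = max 0 (a - min b 1) := by
  unfold Fpw
  split_ifs with h₁ h₂
  · rw [min_eq_left h₁.2, max_eq_right (by linarith [h₁.1])]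
  · rw [min_eq_right h₂.2.le, max_eq_right (by linarith [h₂.1])]
  · simp only [not_and_or, not_le, not_lt] at h₁ h₂
    refine (max_eq_left ?_).symm
    rcases le_total b 1 with hb | hb
    · rw [min_eq_left hb]; rcases h₁ with h | h <;> linarith
    · rw [min_eq_right hb]; rcases h₁ with h | h <;> rcases h₂ with h' | h' <;> linarith

theorem Fpw_isSubmodular : IsSubmodular Fpw := by
  intro a₁ a₂ b₁ b₂ ha hb
  have hc : min b₁ 1 ≤ min b₂ 1 := min_le_min_right 1 hb
  simp only [Fpw_eq_max]
  rcases le_total 0 (a₁ - min b₁ 1) with h₁ | h₁ <;> rcases le_total 0 (a₂ - min b₂ 1) with h₂ | h₂ <;>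
  rcases le_total 0 (a₁ - min b₂ 1) with h₃ | h₃ <;> rcases le_total 0 (a₂ - min b₁ 1) with h₄ | h₄ <;>
  simp only [max_eq_left, max_eq_right, h₁, h₂, h₃, h₄] <;> linarith

theorem Finset.sum_le_sum_of_eq_off_pair {ι M : Type*} [DecidableEq ι] [Fintype ι]
    [AddCommMonoid M] [PartialOrder M] [IsOrderedAddMonoid M] {u v : ι → M} {i j : ι}
    (hij : i ≠ j) (hoff : ∀ k, k ≠ i → k ≠ j → u k = v k) (hpair : u i + u j ≤ v i + v j) :
    ∑ k, u k ≤ ∑ k, v k := by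
  have hsub : ({i, j} : Finset ι) ⊆ univ := subset_univ _
  rw [← sum_sdiff hsub, ← sum_sdiff hsub, sum_pair hij, sum_pair hij]
  refine add_le_add (sum_le_sum fun k hk => (hoff k ?_ ?_).le) hpair <;>
    · simp only [mem_sdiff, mem_insert, mem_singleton, not_or] at hk
      tauto

namespace IsSubmodular

variable {ι α β M : Type*} [LinearOrder ι] [Fintype ι] [Preorder α] [Preorder β]
  [AddCommMonoid M] [PartialOrder M] [IsOrderedAddMonoid M]
  {f : α → β → M} {x : ι → α} {g : ι → β}

/-- Both `π u` and `π⁻¹ u` lie below `u`, so submodularity applies to the exchanged pair. -/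
theorem sum_swap_mul_le (hf : IsSubmodular f) (hx : Monotone x) (hg : Monotone g)
    {π : Perm ι} {u : ι} (hu : u ∈ π.support) (hmax : ∀ k ∈ π.support, k ≤ u) :
    ∑ i, f (x ((swap u (π u) * π) i)) (g i) ≤ ∑ i, f (x (π i)) (g i) := by
  have hπu : π u ≠ u := Perm.mem_support.1 hu
  set j := π⁻¹ u with hj
  have hπj : π j = u := by simp [hj]
  have hju : j ≠ u := fun h => hπu (h ▸ hπj)
  have hj_le : j ≤ u := hmax j (Perm.mem_support.2 (by rw [hπj]; exact hju.symm))
  have hπu_le : π u ≤ u := hmax _ (Perm.apply_mem_support.2 hu)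
  refine sum_le_sum_of_eq_off_pair hju (fun k hkj hku => ?_) ?_
  · have h1 : π k ≠ u := fun h => hkj (Perm.eq_inv_iff_eq.2 h)
    have h2 : π k ≠ π u := π.injective.ne hku
    simp [swap_apply_of_ne_of_ne h1 h2]
  · simp only [Perm.mul_apply, hπj, swap_apply_left, swap_apply_right]
    rw [add_comm (f (x u) (g j))]
    exact hf (hx hπu_le) (hg hj_le)

theorem sum_le_sum_comp_perm (hf : IsSubmodular f) (hx : Monotone x) (hg : Monotone g)
    (π : Perm ι) : ∑ i, f (x i) (g i) ≤ ∑ i, f (x (π i)) (g i) := by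
  induction h : π.support.card using Nat.strong_induction_on generalizing π with
  | _ m ih =>
  obtain rfl | hne := eq_or_ne π 1
  · simp
  have hsupp : π.support.Nonempty := nonempty_iff_ne_empty.2 (Perm.support_eq_empty_iff.not.2 hne)
  set u := π.support.max' hsupp
  have hu : u ∈ π.support := max'_mem _ _
  calc ∑ i, f (x i) (g i) ≤ ∑ i, f (x ((swap u (π u) * π) i)) (g i) :=
        ih _ (h ▸ Perm.card_support_swap_mul (Perm.mem_support.1 hu)) _ rfl
    _ ≤ ∑ i, f (x (π i)) (g i) := hf.sum_swap_mul_le hx hg hu fun k hk => le_max' _ k hk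

end IsSubmodular

theorem stmt1_general (n : ℕ) (a b : Fin n → ℝ)
    (σ τ : Equiv.Perm (Fin n))
    (hσ : ∀ i j : Fin n, i < j → a (σ i) ≤ a (σ j))
    (hτ : ∀ i j : Fin n, i < j → b (τ i) ≤ b (τ j)) :
    ∑ i, Fpw (a (σ i)) (b (τ i)) ≤ ∑ i, Fpw (a i) (b i) := by
  have hsorted := Fpw_isSubmodular.sum_le_sum_comp_perm (monotone_iff_forall_lt.2 hσ)
    (monotone_iff_forall_lt.2 hτ) (σ⁻¹ * τ)
  rw [← Equiv.sum_comp τ fun i => Fpw (a i) (b i)]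
  simpa using hsorted

theorem stmt1 (n : ℕ) (a b : Fin n → ℝ)
    (ha : ∀ i, a i ∈ Set.Icc (0:ℝ) 2) (hb : ∀ i, b i ∈ Set.Icc (0:ℝ) 2)
    (σ τ : Equiv.Perm (Fin n))
    (hσ : ∀ i j : Fin n, i < j → a (σ i) ≤ a (σ j))
    (hτ : ∀ i j : Fin n, i < j → b (τ i) ≤ b (τ j)) :
    ∑ i, Fpw (a (σ i)) (b (τ i)) ≤ ∑ i, Fpw (a i) (b i) :=
  stmt1_general n a b σ τ hσ hτ
end

section
/- Let 0 < b < a < 2 and let z range over the open upper half-plane. Then (z^a - 1)/(z^b - 1) tends to z^{a-b} in argument as |z| → ∞, uniformly in the argument of z: for every ε > 0 there exists R > 0 such that for all z = r·e^{iθ} with 0 < θ < π and r > R, |arg((z^a - 1)/(z^b - 1)) - (a - b)θ| < ε, where z^a = exp(a·Log z) with the principal logarithm and arg((z^a-1)/(z^b-1)) = Arg(z^a - 1) - Arg(z^b - 1) with Arg taking values so that the expression is continuous (one may use the principal argument branch on (0, 2π)). -/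
/-!
Write `z ^ c = w := r ^ c e^{i c θ}`. Then `w - 1 = w (1 + v)` with `v = -w⁻¹` and
`‖v‖ = r ^ (-c) ≤ 1/2`, and Jordan's inequality bounds `|arg (1 + v)|` by `π ‖v‖`. Since
`arg (1 + v)` has the sign of `sin (c θ)`, the angle `c θ + arg (1 + v)` stays in `[0, 2π)`,
so it is `Arg2 (z ^ c - 1)`, which is therefore within `π r ^ (-c)` of `c θ`. For `c = a` and
`c = b` both errors are `O(r ^ (-b))`.
-/

/-- The argument function with values in `[0, 2π)`. -/
noncomputable def Arg2 (z : ℂ) : ℝ :=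
  if Complex.arg z < 0 then Complex.arg z + 2 * Real.pi else Complex.arg z

open Real

namespace Complex

theorem coe_arg_ofReal_mul_exp_mul_I {s : ℝ} (hs : 0 < s) (ψ : ℝ) :
    (arg (s * exp (ψ * I)) : Angle) = ψ := by
  rw [arg_real_mul _ hs, arg_exp_mul_I, Angle.coe_toIocMod]

theorem ofReal_mul_exp_mul_I_cpow {r θ : ℝ} (hr : 0 < r) (hθ : θ ∈ Set.Ioc (-π) π)
    (c : ℝ) :
    (r * exp (θ * I)) ^ (c : ℂ) = ↑(r ^ c) * exp (↑(c * θ) * I) := by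
  have hexp : (r : ℂ) * exp (θ * I) = exp (Real.log r + θ * I) := by
    rw [exp_add, ← ofReal_exp, Real.exp_log hr]
  have hlog : log (exp (Real.log r + θ * I)) = Real.log r + θ * I :=
    log_exp (by simpa using hθ.1) (by simpa using hθ.2)
  rw [hexp, cpow_def_of_ne_zero (exp_ne_zero _), hlog, Real.rpow_def_of_pos hr, ofReal_exp,
    ← exp_add]
  push_cast
  ring_nf

theorem abs_arg_one_add_le {v : ℂ} (hv : ‖v‖ ≤ 1 / 2) : |arg (1 + v)| ≤ π * ‖v‖ := by
  have hre : 1 / 2 ≤ (1 + v).re := by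
    have := neg_abs_le v.re
    have := abs_re_le_norm v
    simp only [add_re, one_re]; linarith
  have hnorm : 1 / 2 ≤ ‖1 + v‖ := hre.trans (re_le_norm _)
  have hsin : |Real.sin (arg (1 + v))| ≤ 2 * ‖v‖ := by
    rw [sin_arg, abs_div, abs_norm, div_le_iff₀ (by linarith), add_im, one_im, zero_add]
    nlinarith [abs_im_le_norm v, norm_nonneg v]
  have hjordan := mul_abs_le_abs_sin (abs_arg_le_pi_div_two_iff.2 (by linarith))
  rw [div_mul_eq_mul_div, div_le_iff₀ pi_pos] at hjordan
  nlinarith [pi_pos]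

end Complex

section

open Complex

theorem Arg2_eq_toIcoMod (z : ℂ) : Arg2 z = toIcoMod two_pi_pos 0 (arg z) := by
  symm
  rw [toIcoMod_eq_iff, zero_add]
  unfold Arg2
  split_ifs with h
  · exact ⟨⟨by linarith [neg_pi_lt_arg z], by linarith⟩, -1, by simp⟩
  · exact ⟨⟨not_lt.1 h, by linarith [arg_le_pi z, pi_pos]⟩, 0, by simp⟩

theorem Arg2_eq_of_coe_arg {z : ℂ} {x : ℝ} (hx : x ∈ Set.Ico 0 (2 * π))
    (hz : (arg z : Angle) = x) : Arg2 z = x := by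
  obtain ⟨k, hk⟩ := Angle.angle_eq_iff_two_pi_dvd_sub.1 hz
  rw [Arg2_eq_toIcoMod, toIcoMod_eq_iff, zero_add]
  exact ⟨hx, k, by rw [zsmul_eq_mul]; linarith⟩

theorem abs_Arg2_ofReal_mul_exp_mul_I_sub_one_sub_le {s ψ : ℝ} (hs : 2 ≤ s)
    (hψ : ψ ∈ Set.Ico 0 (2 * π)) : |Arg2 (s * exp (ψ * I) - 1) - ψ| ≤ π / s := by
  have hs0 : 0 < s := by linarith
  set v : ℂ := -(↑s⁻¹ * exp (↑(-ψ) * I))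
  have hv_norm : ‖v‖ = s⁻¹ := by
    rw [norm_neg, norm_mul, norm_exp_ofReal_mul_I, norm_real, norm_of_nonneg (by positivity),
      mul_one]
  have hv_half : ‖v‖ ≤ 1 / 2 := by rw [hv_norm]; linarith [inv_anti₀ two_pos hs]
  have hv_im : (1 + v).im = s⁻¹ * Real.sin ψ := by
    rw [add_im, one_im, zero_add, neg_im, im_ofReal_mul, exp_ofReal_mul_I_im, Real.sin_neg]
    ring
  have hfactor : (s : ℂ) * exp (ψ * I) - 1 = s * exp (ψ * I) * (1 + v) := by
    have hinv : (s : ℂ) * exp (ψ * I) * (↑s⁻¹ * exp (↑(-ψ) * I)) = 1 := by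
      rw [mul_mul_mul_comm, ← Complex.exp_add, ofReal_neg, neg_mul, add_neg_cancel,
        Complex.exp_zero, mul_one, ofReal_inv, mul_inv_cancel₀ (by exact_mod_cast hs0.ne')]
    linear_combination hinv
  have hsmall : |arg (1 + v)| ≤ π / s :=
    (abs_arg_one_add_le hv_half).trans_eq
      (by rw [hv_norm, div_eq_mul_inv])
  have hsmall' : |arg (1 + v)| ≤ π / 2 :=
    hsmall.trans (div_le_div_of_nonneg_left pi_pos.le two_pos hs)
  have hmem : ψ + arg (1 + v) ∈ Set.Ico 0 (2 * π) := by
    obtain ⟨hψ0, hψ2π⟩ := hψ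
    have := abs_le.1 hsmall'
    rcases le_or_gt ψ π with h | h
    · have : 0 ≤ arg (1 + v) := arg_nonneg_iff.2 <| by
        rw [hv_im]; exact mul_nonneg (by positivity) (sin_nonneg_of_nonneg_of_le_pi hψ0 h)
      constructor <;> linarith [pi_pos]
    · have hsin : Real.sin ψ < 0 := by
        simpa using sin_neg_of_neg_of_neg_pi_lt (x := ψ - 2 * π) (by linarith) (by linarith)
      have : arg (1 + v) < 0 := arg_neg_iff.2 <| by
        rw [hv_im]; exact mul_neg_of_pos_of_neg (by positivity) hsin
      constructor <;> linarith [pi_pos]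
  have hArg2 : Arg2 (s * exp (ψ * I) - 1) = ψ + arg (1 + v) := by
    refine Arg2_eq_of_coe_arg hmem ?_
    have hv : 1 + v ≠ 0 := by
      intro h
      rw [show v = -1 by linear_combination h, norm_neg, norm_one] at hv_half
      norm_num at hv_half
    rw [hfactor, arg_mul_coe_angle (by simp [hs0.ne']) hv, coe_arg_ofReal_mul_exp_mul_I hs0,
      Angle.coe_add]
  rwa [hArg2, add_sub_cancel_left]

theorem abs_Arg2_cpow_sub_one_sub_le {r θ c : ℝ} (hr : 0 < r) (hθ : θ ∈ Set.Ioc (-π) π)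
    (hcθ : c * θ ∈ Set.Ico 0 (2 * π)) (h2 : 2 ≤ r ^ c) :
    |Arg2 ((r * exp (θ * I)) ^ (c : ℂ) - 1) - c * θ| ≤ π / r ^ c := by
  rw [ofReal_mul_exp_mul_I_cpow hr hθ]
  exact abs_Arg2_ofReal_mul_exp_mul_I_sub_one_sub_le h2 hcθ

end

theorem stmt2 (a b : ℝ) (hb : 0 < b) (hba : b < a) (ha : a < 2) :
    ∀ ε > (0:ℝ), ∃ R > (0:ℝ), ∀ r θ : ℝ, R < r → 0 < θ → θ < Real.pi →
      |Arg2 ((↑r * Complex.exp (θ * Complex.I)) ^ (a:ℂ) - 1)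
        - Arg2 ((↑r * Complex.exp (θ * Complex.I)) ^ (b:ℂ) - 1)
        - (a - b) * θ| < ε := by
  intro ε hε
  set M := max 2 (2 * π / ε)
  have hM1 : 1 ≤ M := le_max_of_le_left one_le_two
  refine ⟨M ^ b⁻¹, by positivity, fun r θ hr hθ0 hθπ => ?_⟩
  have hr1 : 1 ≤ r := (one_le_rpow hM1 (inv_nonneg.2 hb.le)).trans hr.le
  have hMr : M < r ^ b := (rpow_inv_lt_iff_of_pos (by positivity) (by positivity) hb).1 hr
  have hrba : r ^ b ≤ r ^ a := rpow_le_rpow_of_exponent_le hr1 hba.le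
  have h2 : 2 ≤ r ^ b := (le_max_left _ _).trans hMr.le
  have hθ : θ ∈ Set.Ioc (-π) π := ⟨by linarith [pi_pos], hθπ.le⟩
  have hA := abs_Arg2_cpow_sub_one_sub_le (c := a) (by linarith) hθ
    ⟨by nlinarith, by nlinarith⟩ (h2.trans hrba)
  have hB := abs_Arg2_cpow_sub_one_sub_le (c := b) (by linarith) hθ
    ⟨by positivity, by nlinarith⟩ h2
  have hε' : 2 * π / r ^ b < ε := by
    rw [div_lt_comm₀ (by positivity) hε]
    exact (le_max_right _ _).trans_lt hMr
  set A := Arg2 ((↑r * Complex.exp (θ * Complex.I)) ^ (a:ℂ) - 1)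
  set B := Arg2 ((↑r * Complex.exp (θ * Complex.I)) ^ (b:ℂ) - 1)
  calc |A - B - (a - b) * θ| = |(A - a * θ) - (B - b * θ)| := by ring_nf
    _ ≤ |A - a * θ| + |B - b * θ| := abs_sub _ _
    _ ≤ π / r ^ a + π / r ^ b := add_le_add hA hB
    _ ≤ π / r ^ b + π / r ^ b := by gcongr
    _ = 2 * π / r ^ b := by ring
    _ < ε := hε'
end

section
/- Let z = r·e^{iπ} with r > 0 and let 0 < b ≤ 1 < a < 2, with powers defined via the principal branch (z^c = r^c·e^{icπ}). Then 0 ≤ Arg(z^a − 1) − Arg(z^b − 1) ≤ (a − b)·π, where Arg takes values in [0, 2π). -/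
/-! Since `(-r)^c = r^c e^{icπ}`, the point `(-r)^a` lies in the open lower half-plane and
`(-r)^b` in the closed upper one. Moving a point one unit to the left increases its argument in
the upper half-plane and decreases it in the lower one: `w = (w - 1) · (w / (w - 1))`, where
`Im (w / (w - 1)) = -Im w / |w - 1|²`, and arguments of factors in opposite open half-planes add
without wrapping around. Passing to `Arg2` adds `2π` exactly on the lower half-plane. -/

open Complex Real

lemma arg2_eq_arg_of_im_nonneg {z : ℂ} (hz : 0 ≤ z.im) : Arg2 z = arg z :=
  if_neg (not_lt.2 (arg_nonneg_iff.2 hz))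

lemma arg2_eq_arg_add_two_pi_of_im_neg {z : ℂ} (hz : z.im < 0) : Arg2 z = arg z + 2 * π :=
  if_pos (arg_neg_iff.2 hz)

namespace Complex

lemma arg_mul_of_im_pos_of_im_neg {x y : ℂ} (hx : 0 < x.im) (hy : y.im < 0) :
    arg (x * y) = arg x + arg y := by
  have hx0 : x ≠ 0 := fun h => by simp [h] at hx
  have hy0 : y ≠ 0 := fun h => by simp [h] at hy
  have hx_nonneg : 0 ≤ arg x := arg_nonneg_iff.2 hx.le
  have hx_lt_pi : arg x < π := arg_lt_pi_iff.2 (Or.inr hx.ne')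
  have hy_neg : arg y < 0 := arg_neg_iff.2 hy
  exact (arg_mul_eq_add_arg_iff hx0 hy0).2
    ⟨by linarith [neg_pi_lt_arg y], by linarith⟩

lemma im_div_sub_one (w : ℂ) : (w / (w - 1)).im = -w.im / normSq (w - 1) := by
  rw [div_im, sub_re, sub_im, one_re, one_im]
  ring

lemma arg_le_arg_sub_one_of_im_nonneg {w : ℂ} (hw : 0 ≤ w.im) : arg w ≤ arg (w - 1) := by
  have him : 0 ≤ (w - 1).im := by simpa using hw
  rcases hw.lt_or_eq with hw | hw
  · have hne : w - 1 ≠ 0 := fun h => by simp [sub_eq_zero.1 h] at hw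
    have hq : (w / (w - 1)).im < 0 := by
      rw [im_div_sub_one]
      exact div_neg_of_neg_of_pos (neg_neg_iff_pos.2 hw) (normSq_pos.2 hne)
    calc arg w = arg ((w - 1) * (w / (w - 1))) := by rw [mul_div_cancel₀ _ hne]
      _ = arg (w - 1) + arg (w / (w - 1)) :=
        arg_mul_of_im_pos_of_im_neg (by simpa using hw) hq
      _ ≤ arg (w - 1) := by linarith [arg_neg_iff.2 hq]
  by_cases hre : w.re < 0
  · rw [arg_eq_pi_iff.2 ⟨hre, hw.symm⟩,
      arg_eq_pi_iff.2 ⟨by rw [sub_re, one_re]; linarith, by simp [← hw]⟩]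
  · rw [arg_eq_zero_iff.2 ⟨not_lt.1 hre, hw.symm⟩]
    exact arg_nonneg_iff.2 him

lemma arg_sub_one_le_arg_of_im_neg {w : ℂ} (hw : w.im < 0) : arg (w - 1) ≤ arg w := by
  have hne : w - 1 ≠ 0 := fun h => by simp [sub_eq_zero.1 h] at hw
  have hq : 0 < (w / (w - 1)).im := by
    rw [im_div_sub_one]
    exact div_pos (neg_pos.2 hw) (normSq_pos.2 hne)
  calc arg (w - 1) ≤ arg (w / (w - 1)) + arg (w - 1) := by linarith [arg_nonneg_iff.2 hq.le]
    _ = arg (w / (w - 1) * (w - 1)) :=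
      (arg_mul_of_im_pos_of_im_neg hq (by simpa using hw)).symm
    _ = arg w := by rw [div_mul_cancel₀ _ hne]

lemma arg_neg_ofReal_cpow {r : ℝ} (hr : 0 < r) (c : ℝ) :
    arg ((-(r : ℂ)) ^ (c : ℂ)) = toIocMod two_pi_pos (-π) (c * π) := by
  rw [← ofReal_neg, ofReal_cpow_of_nonpos (neg_nonpos.2 hr.le), ofReal_neg, neg_neg,
    ← ofReal_cpow hr.le,
    show (π : ℂ) * I * c = ((c * π : ℝ) : ℂ) * I by push_cast; ring,
    arg_real_mul _ (rpow_pos_of_pos hr c), arg_exp_mul_I]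

end Complex

theorem stmt4 (a b r : ℝ) (hr : 0 < r) (hb : 0 < b) (hb1 : b ≤ 1) (ha1 : 1 < a)
    (ha : a < 2) :
    0 ≤ Arg2 ((-(r:ℂ)) ^ (a:ℂ) - 1) - Arg2 ((-(r:ℂ)) ^ (b:ℂ) - 1) ∧
    Arg2 ((-(r:ℂ)) ^ (a:ℂ) - 1) - Arg2 ((-(r:ℂ)) ^ (b:ℂ) - 1) ≤ (a - b) * Real.pi := by
  set wa := (-(r:ℂ)) ^ (a:ℂ)
  set wb := (-(r:ℂ)) ^ (b:ℂ)
  have hπ := pi_pos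
  have hwa : arg wa = a * π - 2 * π := by
    refine (arg_neg_ofReal_cpow hr a).trans (toIocMod_eq_iff _ |>.2 ⟨⟨?_, ?_⟩, 1, ?_⟩)
    · nlinarith
    · nlinarith
    · simp
  have hwb : arg wb = b * π :=
    (arg_neg_ofReal_cpow hr b).trans (toIocMod_eq_self _ |>.2 ⟨by nlinarith, by nlinarith⟩)
  have hwa_im : (wa - 1).im < 0 := by
    simpa using arg_neg_iff.1 (show arg wa < 0 by nlinarith)
  have hwb_im : 0 ≤ (wb - 1).im := by
    simpa using arg_nonneg_iff.1 (show 0 ≤ arg wb by nlinarith)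
  rw [arg2_eq_arg_add_two_pi_of_im_neg hwa_im, arg2_eq_arg_of_im_nonneg hwb_im]
  have hwa_shift := arg_sub_one_le_arg_of_im_neg (by simpa using hwa_im)
  have hwb_shift := arg_le_arg_sub_one_of_im_nonneg (by simpa using hwb_im)
  constructor
  · linarith [neg_pi_lt_arg (wa - 1), arg_le_pi (wb - 1)]
  · linarith
end

section
/- Let z = r·e^{iπ} with r > 0 and let 0 < b < a ≤ 1, with powers defined via the principal branch. Then 0 ≤ arg((z^a − 1)/(z^b − 1)) ≤ (a − b)·π, where arg((z^a−1)/(z^b−1)) denotes Arg(z^a − 1) − Arg(z^b − 1) with Arg valued in [0, 2π). -/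
/-!
Write `u = z ^ a = r ^ a e^{iaπ}` and `v = z ^ b = r ^ b e^{ibπ}`. Both `u - 1` and `v - 1` lie in
the closed upper half-plane, so `δ = arg (u - 1) - arg (v - 1)` lies in `(-π, π)` and its position
relative to an angle `t` is read off from the sign of
`Im ((u - 1) · conj (v - 1) · e^{-it}) = |u - 1| |v - 1| sin (δ - t)`,
for `t = 0` and `t = (a - b)π`.
Expanding, both signs reduce to `r ^ x sin (aπ) ≤ r ^ y sin ((a - b)π) + r ^ z sin (bπ)` whenever
`a x = (a - b) y + b z`: weighted AM-GM for the powers of `r` combined with concavity of `sin`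
on `[0, π]`.
-/

open Real ComplexConjugate

lemma mul_sin_le_sin_mul {l t : ℝ} (hl0 : 0 ≤ l) (hl1 : l ≤ 1) (ht0 : 0 ≤ t) (htπ : t ≤ π) :
    l * sin t ≤ sin (l * t) := by
  simpa using strictConcaveOn_sin_Icc.concaveOn.2 ⟨le_rfl, pi_pos.le⟩ ⟨ht0, htπ⟩
    (sub_nonneg.2 hl1) hl0 (sub_add_cancel 1 l)

lemma rpow_mul_sin_le {r a b x y z : ℝ} (hr : 0 < r) (hb : 0 ≤ b) (hba : b ≤ a) (ha : a ≤ 1)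
    (hxyz : a * x = (a - b) * y + b * z) :
    r ^ x * sin (a * π) ≤ r ^ y * sin ((a - b) * π) + r ^ z * sin (b * π) := by
  rcases (hb.trans hba).eq_or_lt with rfl | ha0
  · simp [show b = 0 by linarith]
  have hl₁ : 0 ≤ (a - b) / a := div_nonneg (by linarith) ha0.le
  have hl₂ : 0 ≤ b / a := div_nonneg hb ha0.le
  have hamgm : r ^ x ≤ (a - b) / a * r ^ y + b / a * r ^ z := by
    calc r ^ x = (r ^ y) ^ ((a - b) / a) * (r ^ z) ^ (b / a) := by
          rw [← rpow_mul hr.le, ← rpow_mul hr.le, ← rpow_add hr]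
          congr 1
          field_simp
          linarith
      _ ≤ _ := geom_mean_le_arith_mean2_weighted hl₁ hl₂ (by positivity) (by positivity)
          (by field_simp; ring)
  have hconcave (l : ℝ) (hl0 : 0 ≤ l) (hl1 : l ≤ 1) : l * sin (a * π) ≤ sin (l * (a * π)) :=
    mul_sin_le_sin_mul hl0 hl1 (by positivity) (by nlinarith [pi_pos])
  have h₁ := hconcave _ hl₁ (by rw [div_le_one ha0]; linarith)
  have h₂ := hconcave _ hl₂ (by rw [div_le_one ha0]; linarith)
  rw [show (a - b) / a * (a * π) = (a - b) * π by field_simp] at h₁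
  rw [show b / a * (a * π) = b * π by field_simp] at h₂
  have hsin : 0 ≤ sin (a * π) :=
    sin_nonneg_of_nonneg_of_le_pi (by positivity) (by nlinarith [pi_pos])
  calc r ^ x * sin (a * π) ≤ ((a - b) / a * r ^ y + b / a * r ^ z) * sin (a * π) := by gcongr
    _ = r ^ y * ((a - b) / a * sin (a * π)) + r ^ z * (b / a * sin (a * π)) := by ring
    _ ≤ _ := by gcongr

namespace Complex

lemma im_mul_conj_mul_exp (z w : ℂ) (t : ℝ) :
    (z * conj w * exp (-t * I)).im = ‖z‖ * ‖w‖ * Real.sin (arg z - arg w - t) := by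
  conv_lhs => rw [← norm_mul_exp_arg_mul_I z, ← norm_mul_exp_arg_mul_I w]
  rw [map_mul, conj_ofReal, ← exp_conj, map_mul, conj_ofReal, conj_I,
    show (‖z‖ : ℂ) * exp (arg z * I) * (‖w‖ * exp (arg w * -I)) * exp (-t * I)
      = ((‖z‖ * ‖w‖ : ℝ) : ℂ) * exp ((arg z - arg w - t : ℝ) * I) by
        push_cast; rw [mul_mul_mul_comm, mul_assoc, ← exp_add, ← exp_add]; ring_nf,
    im_ofReal_mul, exp_ofReal_mul_I_im]

lemma le_arg_sub_arg {z w : ℂ} (hz : z ≠ 0) (hw : w ≠ 0) {t : ℝ}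
    (ht : -π < arg z - arg w - t) (him : 0 ≤ (z * conj w * exp (-t * I)).im) :
    t ≤ arg z - arg w := by
  rw [im_mul_conj_mul_exp] at him
  by_contra! h
  have : Real.sin (arg z - arg w - t) < 0 := sin_neg_of_neg_of_neg_pi_lt (by linarith) ht
  have : 0 < ‖z‖ * ‖w‖ := by positivity
  nlinarith

lemma arg_sub_arg_le {z w : ℂ} (hz : z ≠ 0) (hw : w ≠ 0) {t : ℝ}
    (ht : arg z - arg w - t < π) (him : (z * conj w * exp (-t * I)).im ≤ 0) :
    arg z - arg w ≤ t := by
  rw [im_mul_conj_mul_exp] at him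
  by_contra! h
  have : 0 < Real.sin (arg z - arg w - t) := sin_pos_of_pos_of_lt_pi (by linarith) ht
  have : 0 < ‖z‖ * ‖w‖ := by positivity
  nlinarith

lemma im_sub_one_mul_conj_sub_one_mul_exp (p q α β t : ℝ) :
    ((p * exp (α * I) - 1) * conj (q * exp (β * I) - 1) * exp (-t * I)).im =
      p * q * Real.sin (α - β - t) - p * Real.sin (α - t) + q * Real.sin (β + t)
        - Real.sin t := by
  have h : (p * exp (α * I) - 1) * conj (q * exp (β * I) - 1) * exp (-t * I) =
      ((p * q : ℝ) : ℂ) * exp ((α - β - t : ℝ) * I) - (p : ℂ) * exp ((α - t : ℝ) * I)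
        - (q : ℂ) * exp ((-(β + t) : ℝ) * I) + exp ((-t : ℝ) * I) := by
    simp only [map_sub, map_mul, conj_ofReal, ← exp_conj, conj_I, map_one]
    push_cast
    simp only [sub_eq_add_neg, neg_add, add_mul, neg_mul, exp_add]
    ring_nf
  rw [h]
  simp only [add_im, sub_im, im_ofReal_mul, exp_ofReal_mul_I_im, Real.sin_neg]
  ring

lemma neg_ofReal_cpow_ofReal {r : ℝ} (hr : 0 ≤ r) (c : ℝ) :
    (-(r : ℂ)) ^ (c : ℂ) = ((r ^ c : ℝ) : ℂ) * exp ((c * π : ℝ) * I) := by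
  rw [← ofReal_neg, ofReal_cpow_of_nonpos (by linarith), ofReal_neg, neg_neg, ofReal_cpow hr]
  push_cast
  ring_nf

lemma im_neg_ofReal_cpow_ofReal_sub_one {r : ℝ} (hr : 0 ≤ r) (c : ℝ) :
    ((-(r : ℂ)) ^ (c : ℂ) - 1).im = r ^ c * Real.sin (c * π) := by
  rw [neg_ofReal_cpow_ofReal hr, sub_im, im_ofReal_mul, exp_ofReal_mul_I_im, one_im, sub_zero]

lemma im_neg_ofReal_cpow_ofReal_sub_one_nonneg {r c : ℝ} (hr : 0 ≤ r) (hc0 : 0 ≤ c)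
    (hc1 : c ≤ 1) :
    0 ≤ ((-(r : ℂ)) ^ (c : ℂ) - 1).im := by
  rw [im_neg_ofReal_cpow_ofReal_sub_one hr]
  exact mul_nonneg (by positivity)
    (sin_nonneg_of_nonneg_of_le_pi (by positivity) (by nlinarith [pi_pos]))

lemma im_neg_ofReal_cpow_ofReal_sub_one_pos {r c : ℝ} (hr : 0 < r) (hc0 : 0 < c) (hc1 : c < 1) :
    0 < ((-(r : ℂ)) ^ (c : ℂ) - 1).im := by
  rw [im_neg_ofReal_cpow_ofReal_sub_one hr.le]
  exact mul_pos (by positivity) (sin_pos_of_pos_of_lt_pi (by positivity) (by nlinarith [pi_pos]))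

lemma neg_ofReal_cpow_ofReal_sub_one_ne_zero {r c : ℝ} (hr : 0 < r) (hc0 : 0 < c) (hc1 : c ≤ 1) :
    (-(r : ℂ)) ^ (c : ℂ) - 1 ≠ 0 := by
  rcases hc1.lt_or_eq with hc1 | rfl
  · exact fun h => by simpa [h] using im_neg_ofReal_cpow_ofReal_sub_one_pos hr hc0 hc1
  · rw [ofReal_one, cpow_one]
    intro h
    have : -r = 1 := by simpa using congr_arg re (sub_eq_zero.1 h)
    linarith

lemma im_neg_ofReal_cpow_ofReal_sub_one_mul_conj_mul_exp {r : ℝ} (hr : 0 < r) (a b t : ℝ) :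
    (((-(r : ℂ)) ^ (a : ℂ) - 1) * conj ((-(r : ℂ)) ^ (b : ℂ) - 1) * exp (-t * I)).im =
      r ^ (a + b) * Real.sin ((a - b) * π - t) - r ^ a * Real.sin (a * π - t)
        + r ^ b * Real.sin (b * π + t) - Real.sin t := by
  rw [neg_ofReal_cpow_ofReal hr.le, neg_ofReal_cpow_ofReal hr.le,
    im_sub_one_mul_conj_sub_one_mul_exp, rpow_add hr, sub_mul]

end Complex

lemma Arg2_eq_arg {z : ℂ} (hz : 0 ≤ z.im) : Arg2 z = z.arg :=
  if_neg (Complex.arg_nonneg_iff.2 hz).not_gt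

theorem stmt5 (a b r : ℝ) (hr : 0 < r) (hb : 0 < b) (hba : b < a) (ha : a ≤ 1) :
    0 ≤ Arg2 ((-(r:ℂ)) ^ (a:ℂ) - 1) - Arg2 ((-(r:ℂ)) ^ (b:ℂ) - 1) ∧
    Arg2 ((-(r:ℂ)) ^ (a:ℂ) - 1) - Arg2 ((-(r:ℂ)) ^ (b:ℂ) - 1) ≤ (a - b) * Real.pi := by
  have ha0 : 0 < a := hb.trans hba
  have hXim := Complex.im_neg_ofReal_cpow_ofReal_sub_one_nonneg hr.le ha0.le ha
  have hYim := Complex.im_neg_ofReal_cpow_ofReal_sub_one_pos hr hb (hba.trans_le ha)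
  have hX := Complex.neg_ofReal_cpow_ofReal_sub_one_ne_zero hr ha0 ha
  have hY := Complex.neg_ofReal_cpow_ofReal_sub_one_ne_zero hr hb (hba.le.trans ha)
  have hXarg := Complex.arg_le_pi ((-(r:ℂ)) ^ (a:ℂ) - 1)
  have hXarg' := Complex.arg_nonneg_iff.2 hXim
  have hYarg := Complex.arg_lt_pi_iff.2 (Or.inr hYim.ne')
  have hYarg' := Complex.arg_nonneg_iff.2 hYim.le
  rw [Arg2_eq_arg hXim, Arg2_eq_arg hYim.le]
  refine ⟨Complex.le_arg_sub_arg hX hY (t := 0) (by linarith) ?_,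
    Complex.arg_sub_arg_le hX hY (t := (a - b) * π) (by nlinarith [pi_pos]) ?_⟩
    <;> rw [Complex.im_neg_ofReal_cpow_ofReal_sub_one_mul_conj_mul_exp hr]
  · have key := rpow_mul_sin_le hr hb.le hba.le ha (x := a) (y := a + b) (z := b) (by ring)
    simp only [sub_zero, add_zero, Real.sin_zero]
    linarith
  · have key := rpow_mul_sin_le hr hb.le hba.le ha (x := b) (y := 0) (z := a) (by ring)
    rw [rpow_zero, one_mul] at key
    simp only [sub_self, Real.sin_zero, mul_zero, zero_sub,
      show a * π - (a - b) * π = b * π by ring, show b * π + (a - b) * π = a * π by ring]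
    linarith
end

section
/- Let k > l ≥ 1 be positive integers, let w = ρ·e^{iφ} be a complex number with 0 ≤ ρ ≤ 1 and 0 ≤ φ ≤ π/(k−1), and suppose the sums below are nonzero. Then arg(w^{k-1} + w^{k-2} + ⋯ + w^m) ≥ arg(w^{m-1} + w^{m-2} + ⋯ + w + 1) for every m = 1, 2, …, k−1, where arg denotes the argument in [0, π]. -/
lemma pow_formula (r θ : ℝ) (j : ℕ) :
    ((r:ℂ) * Complex.exp ((θ:ℂ) * Complex.I)) ^ j
      = ((r ^ j : ℝ) : ℂ) * Complex.exp ((((j : ℝ) * θ : ℝ) : ℂ) * Complex.I) := by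
  rw [mul_pow, ← Complex.exp_nat_mul]
  push_cast
  ring_nf

lemma re_formula (r θ : ℝ) :
    ((r:ℂ) * Complex.exp ((θ:ℂ) * Complex.I)).re = r * Real.cos θ := by
  simp [Complex.exp_ofReal_mul_I_re]

lemma im_formula (r θ : ℝ) :
    ((r:ℂ) * Complex.exp ((θ:ℂ) * Complex.I)).im = r * Real.sin θ := by
  simp [Complex.exp_ofReal_mul_I_im]

lemma arg_le_arg_of_cross {z z' : ℂ} (hz : z ≠ 0) (hz' : z' ≠ 0)
    (hz'im : 0 ≤ z'.im) (hzpi : z.arg ≠ Real.pi)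
    (hc : 0 ≤ z.re * z'.im - z.im * z'.re) : z.arg ≤ z'.arg := by
  by_contra h
  push_neg at h
  have ha : 0 ≤ z'.arg := Complex.arg_nonneg_iff.mpr hz'im
  have hb : z.arg < Real.pi := lt_of_le_of_ne (Complex.arg_le_pi z) hzpi
  have habs : 0 < ‖z‖ := norm_pos_iff.mpr hz
  have habs' : 0 < ‖z'‖ := norm_pos_iff.mpr hz'
  have hs : 0 < Real.sin (z.arg - z'.arg) :=
    Real.sin_pos_of_pos_of_lt_pi (by linarith) (by linarith)
  have hform : Real.sin (z.arg - z'.arg)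
      = (z.im * z'.re - z.re * z'.im) / (‖z‖ * ‖z'‖) := by
    rw [Real.sin_sub, Complex.sin_arg, Complex.cos_arg hz, Complex.sin_arg, Complex.cos_arg hz']
    field_simp
  rw [hform] at hs
  have hle : (z.im * z'.re - z.re * z'.im) / (‖z‖ * ‖z'‖) ≤ 0 :=
    div_nonpos_of_nonpos_of_nonneg (by linarith) (by positivity)
  linarith

theorem stmt6 (k l m : ℕ) (hl : 1 ≤ l) (hlk : l < k) (hm : 1 ≤ m) (hmk : m ≤ k - 1)
    (ρ φ : ℝ) (hρ : 0 < ρ) (hρ1 : ρ ≤ 1) (hφ0 : 0 ≤ φ) (hφ : φ ≤ Real.pi / ((k:ℝ) - 1))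
    (w : ℂ) (hw : w = (ρ:ℂ) * Complex.exp ((φ:ℂ) * Complex.I))
    (h1 : ∑ j ∈ Finset.Icc m (k-1), w ^ j ≠ 0)
    (h2 : ∑ j ∈ Finset.range m, w ^ j ≠ 0) :
    Complex.arg (∑ j ∈ Finset.range m, w ^ j)
      ≤ Complex.arg (∑ j ∈ Finset.Icc m (k-1), w ^ j) := by
  subst hw
  set W : ℂ := (ρ:ℂ) * Complex.exp ((φ:ℂ) * Complex.I) with hW
  have hk2 : 2 ≤ k := by omega
  have hkr : (2:ℝ) ≤ (k:ℝ) := by exact_mod_cast hk2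
  have hkpos : (0:ℝ) < (k:ℝ) - 1 := by linarith
  have hφk : φ * ((k:ℝ) - 1) ≤ Real.pi := (le_div_iff₀ hkpos).mp hφ
  have hjφ : ∀ j : ℕ, j ≤ k - 1 → (j:ℝ) * φ ≤ Real.pi := by
    intro j hj
    have hjr : (j:ℝ) ≤ (k:ℝ) - 1 := by
      have h' : j + 1 ≤ k := by omega
      have := (Nat.cast_le (α := ℝ)).mpr h'
      push_cast at this
      linarith
    nlinarith
  have him : ∀ j : ℕ, j ≤ k - 1 → 0 ≤ (W ^ j).im := by
    intro j hj
    rw [pow_formula, im_formula]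
    exact mul_nonneg (pow_nonneg hρ.le j)
      (Real.sin_nonneg_of_nonneg_of_le_pi (by positivity) (hjφ j hj))
  have hB : 0 ≤ (∑ j ∈ Finset.Icc m (k-1), W ^ j).im := by
    rw [Complex.im_sum]
    exact Finset.sum_nonneg fun j hj => him j (Finset.mem_Icc.mp hj).2
  have hπ : (∑ j ∈ Finset.range m, W ^ j).arg ≠ Real.pi := by
    intro h
    rw [Complex.arg_eq_pi_iff] at h
    obtain ⟨hre, him0⟩ := h
    rw [Complex.im_sum] at him0
    have hall : ∀ j ∈ Finset.range m, (W ^ j).im = 0 :=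
      (Finset.sum_eq_zero_iff_of_nonneg
        (fun j hj => him j (by have := Finset.mem_range.mp hj; omega))).mp him0
    have hcos : ∀ j ∈ Finset.range m, (W ^ j).re = ρ ^ j := by
      intro j hj
      have hj' : j < m := Finset.mem_range.mp hj
      have h0 : (W ^ j).im = 0 := hall j hj
      rw [pow_formula, im_formula] at h0
      have hρj : (0:ℝ) < ρ ^ j := pow_pos hρ j
      have hsin : Real.sin ((j:ℝ) * φ) = 0 := by
        rcases mul_eq_zero.mp h0 with h' | h'
        · exact absurd h' (ne_of_gt hρj)
        · exact h'
      have hjlt : (j:ℝ) * φ < Real.pi := by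
        rcases eq_or_lt_of_le hφ0 with h0' | h0'
        · rw [← h0']; simpa using Real.pi_pos
        · have hjr : (j:ℝ) + 2 ≤ (k:ℝ) := by exact_mod_cast (by omega : j + 2 ≤ k)
          nlinarith
      have hz : (j:ℝ) * φ = 0 := by
        have := (Real.sin_eq_zero_iff_of_lt_of_lt
          (by linarith [Real.pi_pos, mul_nonneg (Nat.cast_nonneg (α := ℝ) j) hφ0]) hjlt).mp hsin
        exact this
      rw [pow_formula, re_formula, hz, Real.cos_zero, mul_one]
    have hpos : 0 < (∑ j ∈ Finset.range m, W ^ j).re := by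
      rw [Complex.re_sum, Finset.sum_congr rfl hcos]
      exact Finset.sum_pos (fun j _ => pow_pos hρ j) (Finset.nonempty_range_iff.mpr (by omega))
    linarith
  have hcross : 0 ≤ (∑ j ∈ Finset.range m, W ^ j).re * (∑ j ∈ Finset.Icc m (k-1), W ^ j).im
      - (∑ j ∈ Finset.range m, W ^ j).im * (∑ j ∈ Finset.Icc m (k-1), W ^ j).re := by
    rw [Complex.re_sum, Complex.im_sum, Complex.re_sum, Complex.im_sum,
        Finset.sum_mul_sum, Finset.sum_mul_sum, ← Finset.sum_sub_distrib]
    apply Finset.sum_nonneg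
    intro j hj
    rw [← Finset.sum_sub_distrib]
    apply Finset.sum_nonneg
    intro i hi
    have hj' : j < m := Finset.mem_range.mp hj
    obtain ⟨hmi, hik⟩ := Finset.mem_Icc.mp hi
    rw [pow_formula, pow_formula, re_formula, im_formula, re_formula, im_formula]
    have key : ρ ^ j * Real.cos ((j:ℝ) * φ) * (ρ ^ i * Real.sin ((i:ℝ) * φ))
        - ρ ^ j * Real.sin ((j:ℝ) * φ) * (ρ ^ i * Real.cos ((i:ℝ) * φ))
        = ρ ^ j * ρ ^ i * Real.sin ((i:ℝ) * φ - (j:ℝ) * φ) := by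
      rw [Real.sin_sub]; ring
    rw [key]
    apply mul_nonneg (mul_nonneg (pow_nonneg hρ.le j) (pow_nonneg hρ.le i))
    apply Real.sin_nonneg_of_nonneg_of_le_pi
    · have hji : (j:ℝ) ≤ (i:ℝ) := by exact_mod_cast (by omega : j ≤ i)
      nlinarith
    · have h1' := hjφ i hik
      have h2' : 0 ≤ (j:ℝ) * φ := by positivity
      linarith
  exact arg_le_arg_of_cross h2 h1 hB hπ hcross
end

section
/- Let α₁,…,αₙ, β₁,…,βₙ be positive reals with αᵢ ≠ βⱼ for all i,j, and suppose max{αᵢ, βⱼ : i,j} > 2. Then the function g(z) = ∏_{i=1}^n (z^{αᵢ} − 1)/(z^{βᵢ} − 1) cannot be both holomorphic and zero-free on the open upper half-plane. More precisely: if some αᵢ > 2 then g has a zero in the upper half-plane at e^{iπ/αᵢ} unless some βⱼ ≥ αᵢ; and if some βⱼ > 2 then g has a pole (non-removable singularity) at e^{iπ/βⱼ} unless some αₖ ≥ βⱼ; hence under αᵢ ≠ βⱼ for all i,j, no zero-free holomorphic extension exists. -/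
/-!
Let `M` be the largest of the exponents and `ζ = exp (2πi / M)`, which lies in the upper
half-plane because `M > 2`. For real `0 < c ≤ M` we have `ζ ^ c = 1` exactly when `c = M`.
Letting `z → ζ` through points with `|z| > 1`, where `|z ^ β| > 1` so no denominator vanishes,
continuity of `G` gives `G ζ * ∏ (ζ ^ βᵢ - 1) = ∏ (ζ ^ αᵢ - 1)`. As no `αᵢ` equals a `βⱼ`,
exactly one of the two products contains the vanishing factor with exponent `M`, which is
impossible when `G ζ ≠ 0`.
-/

open Complex Filter Topology Set Real

theorem ContinuousAt.eq_of_eqOn_of_mem_closure {X Y : Type*} [TopologicalSpace X]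
    [TopologicalSpace Y] [T2Space Y] {f g : X → Y} {s : Set X} {x : X}
    (hf : ContinuousAt f x) (hg : ContinuousAt g x) (h : EqOn f g s) (hx : x ∈ closure s) :
    f x = g x :=
  haveI := mem_closure_iff_nhdsWithin_neBot.mp hx
  tendsto_nhds_unique ((hf.mono_left nhdsWithin_le_nhds).congr' (eventuallyEq_nhdsWithin_of_eqOn h))
    (hg.mono_left nhdsWithin_le_nhds)

theorem Complex.exp_cpow_of_im_mem {w : ℂ} (h : w.im ∈ Ioc (-π) π) (c : ℂ) :
    exp w ^ c = exp (c * w) := by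
  rw [cpow_def_of_ne_zero (exp_ne_zero w), log_exp h.1 h.2, mul_comm]

theorem Complex.exp_two_pi_I_div_cpow_eq_one_iff {M c : ℝ} (hM : 2 ≤ M) (hc : 0 < c)
    (hcM : c ≤ M) : exp (2 * π * I / M) ^ (c : ℂ) = 1 ↔ c = M := by
  have hM0 : 0 < M := by linarith
  have him : (2 * π * I / M).im ∈ Ioc (-π) π := by
    rw [show (2 * π * I / M).im = 2 * π / M by simp [div_ofReal_im]]
    exact ⟨by linarith [pi_pos, div_pos two_pi_pos hM0],
      (div_le_iff₀ hM0).mpr (by nlinarith [pi_pos])⟩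
  rw [exp_cpow_of_im_mem him, exp_eq_one_iff]
  constructor
  · rintro ⟨k, hk⟩
    have hck : c / M = k := by
      have h2piI : 2 * π * I ≠ 0 := by simp [pi_ne_zero, I_ne_zero]
      have : ((c / M : ℝ) : ℂ) * (2 * π * I) = (k : ℂ) * (2 * π * I) := by
        rw [← hk]; push_cast; field_simp
      exact_mod_cast mul_right_cancel₀ h2piI this
    have hk1 : k = 1 := by
      have h0 : (0 : ℝ) < k := hck ▸ div_pos hc hM0
      have h1 : (k : ℝ) ≤ 1 := hck ▸ (div_le_one hM0).mpr hcM
      have : (0 : ℤ) < k := by exact_mod_cast h0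
      have : k ≤ (1 : ℤ) := by exact_mod_cast h1
      omega
    rw [hk1, Int.cast_one, div_eq_one_iff_eq hM0.ne'] at hck
    exact hck
  · rintro rfl
    exact ⟨1, by field_simp [ofReal_ne_zero.mpr hM0.ne']; simp⟩

theorem Complex.norm_exp_two_pi_I_div (M : ℝ) : ‖exp (2 * π * I / M)‖ = 1 := by
  simp [norm_exp, div_ofReal_re]

theorem Complex.im_exp_two_pi_I_div_pos {M : ℝ} (hM : 2 < M) : 0 < (exp (2 * π * I / M)).im := by
  have hM0 : 0 < M := by linarith
  rw [show 2 * π * I / M = ((2 * π / M : ℝ) : ℂ) * I by push_cast; ring, exp_ofReal_mul_I_im]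
  exact Real.sin_pos_of_pos_of_lt_pi (by positivity) ((div_lt_iff₀ hM0).mpr (by nlinarith [pi_pos]))

theorem Complex.cpow_ofReal_ne_one_of_one_lt_norm {z : ℂ} (hz : 1 < ‖z‖) {c : ℝ} (hc : 0 < c) :
    z ^ (c : ℂ) ≠ 1 := by
  intro h
  have := norm_cpow_real z c
  rw [h, norm_one] at this
  exact (Real.one_lt_rpow hz hc).ne this

theorem Complex.mem_closure_one_lt_norm_of_im_pos {z : ℂ} (hz : 0 < z.im) (hnorm : 1 ≤ ‖z‖) :
    z ∈ closure {w : ℂ | 0 < w.im ∧ 1 < ‖w‖} := by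
  have hlim : Tendsto (fun r : ℝ => (r : ℂ) * z) (𝓝[>] 1) (𝓝 z) := by
    have : ContinuousAt (fun r : ℝ => (r : ℂ) * z) 1 := by fun_prop
    simpa using this.mono_left nhdsWithin_le_nhds
  refine mem_closure_of_tendsto hlim ?_
  filter_upwards [self_mem_nhdsWithin] with r (hr : 1 < r)
  refine ⟨by simpa using mul_pos (by linarith) hz, ?_⟩
  rw [norm_mul, norm_real, Real.norm_of_nonneg (by linarith)]
  nlinarith

theorem Complex.prod_exp_two_pi_I_div_cpow_sub_one_eq_zero_iff {ι : Type*} [Fintype ι]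
    {M : ℝ} (hM : 2 ≤ M) {γ : ι → ℝ} (hγ : ∀ i, 0 < γ i) (hγM : ∀ i, γ i ≤ M) :
    ∏ i, (exp (2 * π * I / M) ^ (γ i : ℂ) - 1) = 0 ↔ ∃ i, γ i = M := by
  simp only [Finset.prod_eq_zero_iff, Finset.mem_univ, true_and, sub_eq_zero,
    exp_two_pi_I_div_cpow_eq_one_iff hM (hγ _) (hγM _)]

theorem mul_prod_cpow_sub_one_eq_of_eq_prod_div {ι : Type*} [Fintype ι] {α β : ι → ℝ}
    (hβ : ∀ i, 0 < β i) {G : ℂ → ℂ} {z₀ : ℂ} (hG : ContinuousAt G z₀) (hz₀ : 0 < z₀.im)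
    (hnorm : 1 ≤ ‖z₀‖)
    (hform : ∀ z ∈ {z : ℂ | 0 < z.im}, (∀ i, z ^ (β i : ℂ) ≠ 1) →
      G z = ∏ i, (z ^ (α i : ℂ) - 1) / (z ^ (β i : ℂ) - 1)) :
    G z₀ * ∏ i, (z₀ ^ (β i : ℂ) - 1) = ∏ i, (z₀ ^ (α i : ℂ) - 1) := by
  have hcont (γ : ι → ℝ) : ContinuousAt (fun z => ∏ i, (z ^ (γ i : ℂ) - 1)) z₀ :=
    tendsto_finsetProd _ fun _ _ =>
      (continuousAt_cpow_const (Or.inr hz₀.ne')).sub continuousAt_const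
  refine ContinuousAt.eq_of_eqOn_of_mem_closure (f := fun z => G z * ∏ i, (z ^ (β i : ℂ) - 1))
    (hG.mul (hcont β)) (hcont α) ?_ (mem_closure_one_lt_norm_of_im_pos hz₀ hnorm)
  rintro z ⟨hz, hz1⟩
  have hβz : ∀ i, z ^ (β i : ℂ) ≠ 1 := fun i => cpow_ofReal_ne_one_of_one_lt_norm hz1 (hβ i)
  dsimp only
  rw [hform z hz hβz, Finset.prod_div_distrib, div_mul_cancel₀]
  exact Finset.prod_ne_zero_iff.mpr fun i _ => sub_ne_zero.mpr (hβz i)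

theorem stmt9 (n : ℕ) (α β : Fin n → ℝ) (hα : ∀ i, 0 < α i) (hβ : ∀ i, 0 < β i)
    (hne : ∀ i j, α i ≠ β j)
    (hmax : (∃ i, 2 < α i) ∨ (∃ j, 2 < β j)) :
    ¬ ∃ G : ℂ → ℂ, DifferentiableOn ℂ G {z : ℂ | 0 < z.im} ∧
        (∀ z ∈ {z : ℂ | 0 < z.im}, G z ≠ 0) ∧
        (∀ z ∈ {z : ℂ | 0 < z.im}, (∀ i, z ^ ((β i : ℝ) : ℂ) ≠ 1) →
          G z = ∏ i, (z ^ ((α i : ℝ) : ℂ) - 1) / (z ^ ((β i : ℝ) : ℂ) - 1)) := by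
  rintro ⟨G, hGd, hGnz, hform⟩
  have : Nonempty (Fin n) := by rcases hmax with ⟨i, -⟩ | ⟨i, -⟩ <;> exact ⟨i⟩
  obtain ⟨m, hm⟩ := Finite.exists_max (Sum.elim α β)
  set M := Sum.elim α β m
  have hαM : ∀ i, α i ≤ M := fun i => hm (.inl i)
  have hβM : ∀ j, β j ≤ M := fun j => hm (.inr j)
  have hM : 2 < M := by
    rcases hmax with ⟨i, hi⟩ | ⟨j, hj⟩
    exacts [hi.trans_le (hαM i), hj.trans_le (hβM j)]
  set z₀ := exp (2 * π * I / M)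
  have hz₀ : 0 < z₀.im := im_exp_two_pi_I_div_pos hM
  have hlimit := mul_prod_cpow_sub_one_eq_of_eq_prod_div hβ
    (hGd.differentiableAt ((isOpen_lt continuous_const continuous_im).mem_nhds hz₀)).continuousAt
    hz₀ (norm_exp_two_pi_I_div M).ge hform
  have hzeroα := prod_exp_two_pi_I_div_cpow_sub_one_eq_zero_iff hM.le hα hαM
  have hzeroβ := prod_exp_two_pi_I_div_cpow_sub_one_eq_zero_iff hM.le hβ hβM
  rcases m with i | j
  · have hβ0 : ∏ j, (z₀ ^ (β j : ℂ) - 1) ≠ 0 := by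
      rw [Ne, hzeroβ]; rintro ⟨j, hj⟩; exact hne i j hj.symm
    rw [hzeroα.mpr ⟨i, rfl⟩] at hlimit
    exact hGnz z₀ hz₀ ((mul_eq_zero.mp hlimit).resolve_right hβ0)
  · have hα0 : ∏ i, (z₀ ^ (α i : ℂ) - 1) ≠ 0 := by
      rw [Ne, hzeroα]; rintro ⟨i, hi⟩; exact hne i j hi
    rw [hzeroβ.mpr ⟨j, rfl⟩, mul_zero] at hlimit
    exact hα0 hlimit.symm
end

section
/- Let a = 1 and −1 < b < 0. Then there exists r > 0 such that for z = r·e^{iπ}, Im((z + 1)/(z^b + 1)) < 0; explicitly, Im((z+1)/(z^b+1)) = r^b(r − 1)·sin(bπ)/|z^b+1|², which is negative whenever r > 1 (since sin(bπ) < 0 gives the product r^b(r−1)sin(bπ) < 0; note sin(bπ) < 0 for −1 < b < 0). -/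
/-!
On the principal branch `(-r) ^ b = r ^ b e^{ibπ}`, so the denominator `(-r) ^ b + 1` has imaginary
part `r ^ b sin (bπ)`, which is negative for `-1 < b < 0`, while the numerator `1 - r` is real.
Hence the quotient has imaginary part `r ^ b (r - 1) sin (bπ) / |(-r) ^ b + 1|²`, negative once
`r > 1`; take `r = 2`.
-/

open Complex Real

theorem im_neg_ofReal_cpow_ofReal {r : ℝ} (hr : 0 ≤ r) (b : ℝ) :
    ((-(r : ℂ)) ^ (b : ℂ)).im = r ^ b * Real.sin (b * π) := by
  have h := ofReal_cpow_of_nonpos (neg_nonpos.mpr hr) (b : ℂ)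
  rw [ofReal_neg, neg_neg, ← ofReal_cpow hr,
    show (π : ℂ) * I * b = ((b * π : ℝ) : ℂ) * I by push_cast; ring, exp_mul_I] at h
  rw [h, ← ofReal_cos, ← ofReal_sin, im_ofReal_mul, add_im, ofReal_im,
    im_ofReal_mul, I_im, zero_add, mul_one]

theorem im_neg_ofReal_add_one_div_cpow_add_one {r : ℝ} (hr : 0 ≤ r) (b : ℝ) :
    ((-(r : ℂ) + 1) / ((-(r : ℂ)) ^ (b : ℂ) + 1)).im =
      r ^ b * (r - 1) * Real.sin (b * π) / normSq ((-(r : ℂ)) ^ (b : ℂ) + 1) := by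
  rw [show -(r : ℂ) + 1 = ((1 - r : ℝ) : ℂ) by push_cast; ring, div_im, ofReal_re, ofReal_im,
    add_im, one_im, add_zero, im_neg_ofReal_cpow_ofReal hr]
  ring

theorem sin_mul_pi_neg {b : ℝ} (hb1 : -1 < b) (hb0 : b < 0) : Real.sin (b * π) < 0 :=
  Real.sin_neg_of_neg_of_neg_pi_lt (mul_neg_of_neg_of_pos hb0 pi_pos) (by nlinarith [pi_pos])

theorem im_neg_ofReal_add_one_div_cpow_add_one_neg {r b : ℝ} (hr : 1 < r) (hb1 : -1 < b)
    (hb0 : b < 0) : ((-(r : ℂ) + 1) / ((-(r : ℂ)) ^ (b : ℂ) + 1)).im < 0 := by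
  have hr0 : 0 ≤ r := by linarith
  have hsin := sin_mul_pi_neg hb1 hb0
  have hpow := Real.rpow_pos_of_pos (by linarith : 0 < r) b
  have hnum : r ^ b * (r - 1) * Real.sin (b * π) < 0 :=
    mul_neg_of_pos_of_neg (mul_pos hpow (by linarith)) hsin
  have hden : (-(r : ℂ)) ^ (b : ℂ) + 1 ≠ 0 := fun h => by
    have him := congrArg Complex.im h
    rw [add_im, one_im, add_zero, im_neg_ofReal_cpow_ofReal hr0, zero_im] at him
    exact (mul_neg_of_pos_of_neg hpow hsin).ne him
  rw [im_neg_ofReal_add_one_div_cpow_add_one hr0]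
  exact div_neg_of_neg_of_pos hnum (normSq_pos.mpr hden)

theorem stmt12 (b : ℝ) (hb1 : -1 < b) (hb0 : b < 0) :
    ∃ r : ℝ, 0 < r ∧ (((-(r:ℂ)) + 1) / ((-(r:ℂ)) ^ (b:ℂ) + 1)).im < 0 :=
  ⟨2, two_pos, im_neg_ofReal_add_one_div_cpow_add_one_neg one_lt_two hb1 hb0⟩
end

section
/- Let a, b be real numbers with a ≠ b and define h₂(t) = (t^a + 1)/(t^b + 1) on (0,∞). If b > 0 ≥ a, then h₂ is not operator monotone on (0,∞). -/
/-- The open upper half-plane. -/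
def UHP : Set ℂ := {z : ℂ | 0 < z.im}

/-- By Löwner's theorem, a (continuous) function on `(0,∞)` is operator monotone
iff it extends to a Pick function: a holomorphic map of the upper half-plane into
its closure, with boundary values `f` on `(0,∞)`. We take this as the definition. -/
def OperatorMonotoneOn (f : ℝ → ℝ) : Prop :=
  ∃ F : ℂ → ℂ, DifferentiableOn ℂ F UHP ∧ (∀ z ∈ UHP, 0 ≤ (F z).im) ∧
    ∀ t : ℝ, 0 < t → Filter.Tendsto F (nhdsWithin (t : ℂ) UHP) (nhds ((f t : ℂ)))

/-!
A Pick function `F` whose boundary values `f` on `(0, ∞)` are continuous forces `f` to be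
non-decreasing. Glue `F` and `f` into a function continuous on the closed quadrant and take the
imaginary part of the Cauchy–Goursat identity on a thin rectangle `[s, t] × [0, δ]`: the bottom
edge contributes nothing because `f` is real, so
`∫₀^δ Re F(t + iy) dy - ∫₀^δ Re F(s + iy) dy = ∫ₛᵗ Im F(x + iδ) dx ≥ 0`,
which fails for small `δ` if `f t < f s`. But `h₂ 1 = 1 > (2^a + 1) / (2^b + 1) = h₂ 2`.
-/

open Complex Set Filter Topology MeasureTheory intervalIntegral

theorem integral_re_vertical_le_of_im_nonneg {G : ℂ → ℂ} {s t δ : ℝ} (hst : s ≤ t)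
    (hδ : 0 ≤ δ) (hGc : ContinuousOn G (Icc s t ×ℂ Icc 0 δ))
    (hGd : DifferentiableOn ℂ G (Ioo s t ×ℂ Ioo 0 δ))
    (h_bot : ∀ x ∈ Icc s t, (G x).im = 0)
    (h_top : ∀ x ∈ Icc s t, 0 ≤ (G (x + δ * I)).im) :
    ∫ y in 0..δ, (G (s + y * I)).re ≤ ∫ y in 0..δ, (G (t + y * I)).re := by
  have h_integrable : ∀ (γ : ℝ → ℂ) (a b : ℝ), a ≤ b → Continuous γ →
      MapsTo γ (Icc a b) (Icc s t ×ℂ Icc 0 δ) → IntervalIntegrable (G ∘ γ) volume a b :=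
    fun _ _ _ hab hγ hmaps => (hGc.comp hγ.continuousOn hmaps).intervalIntegrable_of_Icc hab
  have h_rect := integral_boundary_rect_eq_zero_of_continuousOn_of_differentiableOn G s
    (t + δ * I) (by simpa [uIcc_of_le hst, uIcc_of_le hδ] using hGc)
    (by simpa [hst, hδ] using hGd)
  have h_bot_int : IntervalIntegrable (fun x : ℝ => G x) volume s t :=
    h_integrable (fun x : ℝ => (x : ℂ)) s t hst (by fun_prop) fun x hx => by
      simpa [mem_reProdIm, hδ] using hx
  have h_top_int : IntervalIntegrable (fun x : ℝ => G (x + δ * I)) volume s t :=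
    h_integrable (fun x : ℝ => x + δ * I) s t hst (by fun_prop) fun x hx => by
      simpa [mem_reProdIm, hδ] using hx
  have h_left_int : IntervalIntegrable (fun y : ℝ => G (s + y * I)) volume 0 δ :=
    h_integrable (fun y : ℝ => s + y * I) 0 δ hδ (by fun_prop) fun y hy => by
      simpa [mem_reProdIm, hst] using hy
  have h_right_int : IntervalIntegrable (fun y : ℝ => G (t + y * I)) volume 0 δ :=
    h_integrable (fun y : ℝ => t + y * I) 0 δ hδ (by fun_prop) fun y hy => by
      simpa [mem_reProdIm, hst] using hy
  have h_flux := congrArg Complex.im h_rect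
  simp only [ofReal_im, ofReal_zero, zero_mul, add_zero, ofReal_re, add_re, mul_re, I_re,
    mul_zero, I_im, mul_one, sub_self, add_im, mul_im, zero_add, smul_eq_mul, sub_im, one_mul,
    zero_im] at h_flux
  rw [← imCLM_apply, ← imCLM_apply, ← reCLM_apply, ← reCLM_apply,
    ← imCLM.intervalIntegral_comp_comm h_bot_int, ← imCLM.intervalIntegral_comp_comm h_top_int,
    ← reCLM.intervalIntegral_comp_comm h_left_int,
    ← reCLM.intervalIntegral_comp_comm h_right_int]
    at h_flux
  simp only [imCLM_apply, reCLM_apply] at h_flux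
  have h_bot_zero : ∫ x in s..t, (G x).im = 0 := by
    rw [integral_congr (g := fun _ => 0) fun x hx => h_bot x (uIcc_of_le hst ▸ hx),
      intervalIntegral.integral_zero]
  have h_top_nonneg : 0 ≤ ∫ x in s..t, (G (x + δ * I)).im :=
    integral_nonneg hst fun x hx => h_top x hx
  linarith

theorem isOpen_UHP : IsOpen UHP := isOpen_lt continuous_const continuous_im

noncomputable def UHP.extend (F : ℂ → ℂ) (f : ℝ → ℝ) (z : ℂ) : ℂ :=
  if 0 < z.im then F z else f z.re

theorem UHP.extend_of_mem {F : ℂ → ℂ} {f : ℝ → ℝ} {z : ℂ} (hz : z ∈ UHP) :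
    UHP.extend F f z = F z := if_pos hz

theorem UHP.extend_of_im_eq_zero {F : ℂ → ℂ} {f : ℝ → ℝ} {z : ℂ} (hz : z.im = 0) :
    UHP.extend F f z = f z.re := if_neg hz.not_gt

theorem UHP.continuousOn_extend {F : ℂ → ℂ} {f : ℝ → ℝ} (hFd : DifferentiableOn ℂ F UHP)
    (hf : ContinuousOn f (Ioi 0))
    (hlim : ∀ t : ℝ, 0 < t → Tendsto F (𝓝[UHP] t) (𝓝 (f t))) :
    ContinuousOn (UHP.extend F f) (Ioi 0 ×ℂ Ici 0) := by
  intro z hz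
  obtain ⟨hre, him⟩ := mem_reProdIm.1 hz
  rcases (show 0 ≤ z.im from him).lt_or_eq with hpos | hzero
  · have hU : UHP ∈ 𝓝 z := isOpen_UHP.mem_nhds hpos
    have hGF : UHP.extend F f =ᶠ[𝓝 z] F := eventually_of_mem hU fun w hw => extend_of_mem hw
    exact ((hFd.differentiableAt hU).continuousAt.congr hGF.symm).continuousWithinAt
  · have hGz : UHP.extend F f z = f z.re := extend_of_im_eq_zero hzero.symm
    have hz_real : z = (z.re : ℂ) := Complex.ext (by simp) (by simp [← hzero])
    refine ContinuousWithinAt.mono (t := UHP ∪ Ioi 0 ×ℂ {0}) ?_ fun w hw => ?_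
    · refine continuousWithinAt_union.2 ⟨?_, ?_⟩
      · rw [ContinuousWithinAt, hGz, hz_real]
        exact (hlim z.re hre).congr'
          (eventually_nhdsWithin_of_forall fun w hw => (extend_of_mem hw).symm)
      · have : ContinuousWithinAt (fun w : ℂ => (f w.re : ℂ)) (Ioi 0 ×ℂ {0}) z :=
          continuous_ofReal.continuousAt.comp_continuousWithinAt
            ((hf z.re hre).comp continuous_re.continuousWithinAt fun w hw => hw.1)
        exact this.congr (fun w hw => extend_of_im_eq_zero hw.2) hGz
    · obtain ⟨hwre, hwim⟩ := mem_reProdIm.1 hw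
      rcases (show 0 ≤ w.im from hwim).lt_or_eq with h | h
      · exact Or.inl h
      · exact Or.inr ⟨hwre, h.symm⟩

theorem OperatorMonotoneOn.monotoneOn {f : ℝ → ℝ} (h : OperatorMonotoneOn f)
    (hf : ContinuousOn f (Ioi 0)) : MonotoneOn f (Ioi 0) := by
  obtain ⟨F, hFd, hFim, hlim⟩ := h
  set G := UHP.extend F f
  have hGc : ContinuousOn G (Ioi 0 ×ℂ Ici 0) := UHP.continuousOn_extend hFd hf hlim
  have hvert : ∀ u ∈ Ioi (0 : ℝ), ContinuousOn (fun y : ℝ => (G (u + y * I)).re) (Ici 0) :=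
    fun u hu => continuous_re.comp_continuousOn
      (hGc.comp (by fun_prop) fun y hy => by simpa [mem_reProdIm, hu] using hy)
  intro s hs t ht hst
  by_contra! hlt
  obtain ⟨δ, hδ, hδlt⟩ :
      ∃ δ : ℝ, 0 < δ ∧ ∀ y ∈ Icc 0 δ, (G (t + y * I)).re < (G (s + y * I)).re := by
    have hev : ∀ᶠ y : ℝ in 𝓝[≥] 0, (G (t + y * I)).re < (G (s + y * I)).re :=
      Tendsto.eventually_lt (hvert t ht 0 self_mem_Ici) (hvert s hs 0 self_mem_Ici)
        (by simpa [G, UHP.extend_of_im_eq_zero] using hlt)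
    obtain ⟨δ', hδ', hsub⟩ := mem_nhdsGE_iff_exists_Ico_subset.1 hev
    have hδ'_pos : 0 < δ' := hδ'
    exact ⟨δ' / 2, by positivity, fun y hy => hsub ⟨hy.1, by linarith [hy.2]⟩⟩
  have hrect : Icc s t ×ℂ Icc 0 δ ⊆ Ioi 0 ×ℂ Ici 0 := fun z hz =>
    ⟨lt_of_lt_of_le hs hz.1.1, hz.2.1⟩
  have hflux := integral_re_vertical_le_of_im_nonneg hst hδ.le (hGc.mono hrect)
    ((hFd.mono fun z hz => hz.2.1).congr fun z hz => UHP.extend_of_mem hz.2.1)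
    (fun x _ => by simp [G, UHP.extend_of_im_eq_zero])
    fun x _ => by
      have hmem : (x + δ * I : ℂ) ∈ UHP := by simpa [UHP] using hδ
      simpa only [G, UHP.extend_of_mem hmem] using hFim _ hmem
  have hgap := integral_lt_integral_of_continuousOn_of_le_of_exists_lt hδ
    ((hvert t ht).mono Icc_subset_Ici_self) ((hvert s hs).mono Icc_subset_Ici_self)
    (fun y hy => (hδlt y (Ioc_subset_Icc_self hy)).le)
    ⟨0, ⟨le_rfl, hδ.le⟩, hδlt 0 ⟨le_rfl, hδ.le⟩⟩
  exact hgap.not_ge hflux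

theorem stmt19_general (a b : ℝ) (hb : 0 < b) (ha : a ≤ 0) :
    ¬ OperatorMonotoneOn (fun t => (t ^ a + 1) / (t ^ b + 1)) := by
  intro h
  have hcont : ContinuousOn (fun t : ℝ => (t ^ a + 1) / (t ^ b + 1)) (Ioi 0) :=
    ContinuousOn.div (by fun_prop (disch := grind)) (by fun_prop (disch := grind))
      fun t ht => (add_pos (Real.rpow_pos_of_pos ht b) one_pos).ne'
  have h12 := h.monotoneOn hcont (by norm_num : (1 : ℝ) ∈ Ioi 0)
    (by norm_num : (2 : ℝ) ∈ Ioi 0) one_le_two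
  have h2a : (2 : ℝ) ^ a ≤ 1 := Real.rpow_le_one_of_one_le_of_nonpos one_le_two ha
  have h2b : 1 < (2 : ℝ) ^ b := Real.one_lt_rpow one_lt_two hb
  simp only [Real.one_rpow] at h12
  rw [le_div_iff₀ (by positivity)] at h12
  linarith

theorem stmt19 (a b : ℝ) (hne : a ≠ b) (hb : 0 < b) (ha : a ≤ 0) :
    ¬ OperatorMonotoneOn (fun t => (t ^ a + 1) / (t ^ b + 1)) :=
  stmt19_general a b hb ha
end
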